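/- For a polynomial p of degree at most 1, ∫₀¹ p(z) φ₀((1-z)²λ) dz = ∑_{l=0}^∞ p(1/(2l+2)) (-1)^l λ^l / (2l+1)!, where φ₀(μ) = ∑_{l=0}^∞ (-1)^l μ^l/(2l)! and the series converges for every real λ. -/

import Mathlib

/-!
Since `(1 - z)² ≤ 1` on `[0, 1]`, the `l`-th term of `p(z) φ₀((1 - z)² λ)` is dominated by
`|p(z)| |λ|^l / l!`, so dominated convergence lets us integrate term by term. For `p` of degree
at most one, `∫₀¹ p(z) (1 - z)^n dz = p(1/(n+2)) / (n+1)` (substitute `z ↦ 1 - z`), and with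
`n = 2l` the factor `1/(2l+1)` turns `(2l)!` into `(2l+1)!`.
-/

open Polynomial

/-- The `l`-th term of `φ₀(μ) = ∑ₗ (-1)^l μ^l / (2l)!`. -/
noncomputable def phiZeroTerm (μ : ℝ) (l : ℕ) : ℝ := (-1) ^ l * μ ^ l / (2 * l).factorial

lemma abs_phiZeroTerm_le {μ r : ℝ} (h : |μ| ≤ r) (l : ℕ) :
    |phiZeroTerm μ l| ≤ r ^ l / l.factorial := by
  rw [phiZeroTerm, abs_div, abs_mul, abs_pow, abs_pow, abs_neg, abs_one, one_pow, one_mul,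
    Nat.abs_cast]
  have hr : 0 ≤ r := (abs_nonneg μ).trans h
  gcongr
  omega

lemma summable_phiZeroTerm (μ : ℝ) : Summable (phiZeroTerm μ) :=
  .of_norm_bounded (Real.summable_pow_div_factorial |μ|) (abs_phiZeroTerm_le le_rfl)

theorem Polynomial.integral_eval_mul_one_sub_pow {p : ℝ[X]} (hp : p.degree ≤ 1) (n : ℕ) :
    ∫ z in (0 : ℝ)..1, p.eval z * (1 - z) ^ n = p.eval (1 / ((n : ℝ) + 2)) / (n + 1) := by
  set a := p.coeff 1
  set b := p.coeff 0
  have hsub := intervalIntegral.integral_comp_sub_left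
    (fun x : ℝ => (a + b) * x ^ n - a * x ^ (n + 1)) (a := 0) (b := 1) 1
  simp only [sub_self, sub_zero] at hsub
  rw [eq_X_add_C_of_degree_le_one hp]
  simp only [eval_add, eval_mul, eval_C, eval_X]
  calc ∫ z in (0 : ℝ)..1, (a * z + b) * (1 - z) ^ n
      = ∫ z in (0 : ℝ)..1, (a + b) * (1 - z) ^ n - a * (1 - z) ^ (n + 1) := by
        congr 1 with z
        ring
    _ = ∫ x in (0 : ℝ)..1, (a + b) * x ^ n - a * x ^ (n + 1) := hsub
    _ = (a + b) / (n + 1) - a / (n + 2) := by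
        rw [intervalIntegral.integral_sub ((intervalIntegral.intervalIntegrable_pow n).const_mul _)
            ((intervalIntegral.intervalIntegrable_pow _).const_mul _),
          intervalIntegral.integral_const_mul, intervalIntegral.integral_const_mul,
          integral_pow, integral_pow]
        push_cast
        ring
    _ = (a * (1 / (n + 2)) + b) / (n + 1) := by
        field_simp
        ring

lemma integral_eval_mul_phiZeroTerm {p : ℝ[X]} (hp : p.degree ≤ 1) (lam : ℝ) (l : ℕ) :
    ∫ z in (0 : ℝ)..1, p.eval z * phiZeroTerm ((1 - z) ^ 2 * lam) l
      = p.eval (1 / (2 * (l : ℝ) + 2)) * (-1) ^ l * lam ^ l / (2 * l + 1).factorial := by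
  have hterm : ∀ z : ℝ, p.eval z * phiZeroTerm ((1 - z) ^ 2 * lam) l
      = (-1) ^ l * lam ^ l / (2 * l).factorial * (p.eval z * (1 - z) ^ (2 * l)) := by
    intro z
    rw [phiZeroTerm, mul_pow, ← pow_mul]
    ring
  simp_rw [hterm]
  rw [intervalIntegral.integral_const_mul, integral_eval_mul_one_sub_pow hp,
    Nat.factorial_succ]
  push_cast
  field_simp

theorem hasSum_integral_mul_phiZeroTerm {g : ℝ → ℝ} (hg : Continuous g) (lam : ℝ) :
    HasSum (fun l => ∫ z in (0 : ℝ)..1, g z * phiZeroTerm ((1 - z) ^ 2 * lam) l)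
      (∫ z in (0 : ℝ)..1, g z * ∑' l, phiZeroTerm ((1 - z) ^ 2 * lam) l) := by
  refine intervalIntegral.hasSum_integral_of_dominated_convergence
    (fun l z => |g z| * (|lam| ^ l / l.factorial)) (fun l => ?_) (fun l => ?_) ?_ ?_ ?_
  · exact (hg.mul (by unfold phiZeroTerm; fun_prop)).aestronglyMeasurable
  · refine .of_forall fun z hz => ?_
    rw [Set.uIoc_of_le zero_le_one] at hz
    have hsq : |(1 - z) ^ 2 * lam| ≤ |lam| := by
      rw [abs_mul, abs_sq]
      exact mul_le_of_le_one_left (abs_nonneg lam) (by nlinarith [hz.1, hz.2])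
    rw [Real.norm_eq_abs, abs_mul]
    exact mul_le_mul_of_nonneg_left (abs_phiZeroTerm_le hsq l) (abs_nonneg _)
  · exact .of_forall fun z _ => (Real.summable_pow_div_factorial |lam|).mul_left _
  · simp_rw [tsum_mul_left]
    exact (by fun_prop : Continuous _).intervalIntegrable 0 1
  · exact .of_forall fun z _ => (summable_phiZeroTerm _).hasSum.mul_left (g z)

theorem stmt_18 (p : Polynomial ℝ) (hp : p.degree ≤ 1) (lam : ℝ) :
    Summable (fun l : ℕ =>
      p.eval (1 / (2 * (l : ℝ) + 2)) * (-1 : ℝ) ^ l * lam ^ l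
        / (Nat.factorial (2 * l + 1) : ℝ)) ∧
    (∫ z in (0:ℝ)..1, p.eval z *
        (∑' l : ℕ, ((-1 : ℝ) ^ l * ((1 - z) ^ 2 * lam) ^ l / (Nat.factorial (2 * l) : ℝ))))
      = ∑' l : ℕ, p.eval (1 / (2 * (l : ℝ) + 2)) * (-1 : ℝ) ^ l * lam ^ l
          / (Nat.factorial (2 * l + 1) : ℝ) := by
  have h := hasSum_integral_mul_phiZeroTerm p.continuous lam
  simp_rw [integral_eval_mul_phiZeroTerm hp] at h
  exact ⟨h.summable, h.tsum_eq.symm⟩
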